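/- Let F be a field and k ≥ 1, let p(x) ∈ F[x] be a monic polynomial of degree k with p(0) ≠ 0, and let A ∈ M_{2k}(F) be the block-diagonal matrix with blocks 0_{k×k} and the companion matrix C(p(x)). If N ∈ M_{2k}(F) is a square-zero matrix such that A + N is invertible, then the lower-left k×k block of N (the submatrix with entries N_{i,j} for k+1 ≤ i ≤ 2k and 1 ≤ j ≤ k) is an invertible matrix in M_k(F). -/

import Mathlib

open Polynomial Matrix

/-- The companion matrix of a (monic) polynomial `p`, as a `k × k` matrix:
1's on the subdiagonal, last column `(-p.coeff 0, …, -p.coeff (k-1))ᵀ`, zeros elsewhere. -/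
def companionMatrix {F : Type*} [Field F] (k : ℕ) (p : Polynomial F) :
    Matrix (Fin k) (Fin k) F :=
  Matrix.of fun i j =>
    if (j : ℕ) = k - 1 then -p.coeff i
    else if (i : ℕ) = (j : ℕ) + 1 then 1 else 0

/-!
If the lower-left block `c` of `N` kills some `v ≠ 0`, then `N` maps `(v, 0)` to `(a v, 0)`, where
`a` is the upper-left block. Since `N² = 0`, one of `(v, 0)` and `(a v, 0)` is a nonzero vector of
the first block coordinate killed by `N`. The matrix `A` vanishes on that coordinate too, so
`A + N` has a nontrivial kernel.
-/

namespace Matrix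

variable {m n R : Type*} [Fintype m] [Fintype n]

theorem mulVec_sumElim_zero [NonUnitalNonAssocSemiring R] (N : Matrix (m ⊕ n) (m ⊕ n) R)
    (v : m → R) :
    N *ᵥ Sum.elim v 0 = Sum.elim (N.toBlocks₁₁ *ᵥ v) (N.toBlocks₂₁ *ᵥ v) := by
  conv_lhs => rw [← fromBlocks_toBlocks N]
  simp [fromBlocks_mulVec]

theorem exists_mulVec_sumElim_zero_eq_zero_of_mul_self_eq_zero [CommRing R]
    {N : Matrix (m ⊕ n) (m ⊕ n) R} (hN : N * N = 0) {v : m → R} (hv : v ≠ 0)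
    (hcv : N.toBlocks₂₁ *ᵥ v = 0) :
    ∃ y : m → R, y ≠ 0 ∧ N *ᵥ Sum.elim y 0 = 0 := by
  have hNv : N *ᵥ Sum.elim v 0 = Sum.elim (N.toBlocks₁₁ *ᵥ v) 0 := by
    rw [mulVec_sumElim_zero, hcv]
  by_cases hav : N.toBlocks₁₁ *ᵥ v = 0
  · exact ⟨v, hv, by rw [hNv, hav, Sum.elim_zero_zero]⟩
  · refine ⟨N.toBlocks₁₁ *ᵥ v, hav, ?_⟩
    rw [← hNv, mulVec_mulVec, hN, zero_mulVec]

theorem isUnit_toBlocks₂₁_of_isUnit_add_of_sq_eq_zero {K : Type*} [Field K] [DecidableEq n]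
    {A N : Matrix (n ⊕ n) (n ⊕ n) K} (hA : ∀ y : n → K, A *ᵥ Sum.elim y 0 = 0)
    (hN : N ^ 2 = 0) (hAN : IsUnit (A + N)) :
    IsUnit N.toBlocks₂₁ := by
  by_contra hc
  obtain ⟨v, hv, hcv⟩ : ∃ v ≠ 0, N.toBlocks₂₁ *ᵥ v = 0 := by
    rwa [exists_mulVec_eq_zero_iff, ← not_ne_iff, ← isUnit_iff_ne_zero, ← isUnit_iff_isUnit_det]
  obtain ⟨y, hy, hNy⟩ :=
    exists_mulVec_sumElim_zero_eq_zero_of_mul_self_eq_zero (sq N ▸ hN) hv hcv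
  have hker : (A + N) *ᵥ Sum.elim y 0 = (A + N) *ᵥ Sum.elim 0 0 := by
    rw [add_mulVec, hA, hNy, add_zero, Sum.elim_zero_zero, mulVec_zero]
  exact hy (Sum.elim_eq_iff.1 (mulVec_injective_of_isUnit hAN hker)).1

end Matrix

theorem squareZero_lowerLeft_invertible_general
    (F : Type*) [Field F] (k : ℕ)
    (p : Polynomial F)
    (A : Matrix (Fin k ⊕ Fin k) (Fin k ⊕ Fin k) F)
    (hA : A = Matrix.fromBlocks 0 0 0 (companionMatrix k p))
    (N : Matrix (Fin k ⊕ Fin k) (Fin k ⊕ Fin k) F)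
    (hN : N ^ 2 = 0) (hInv : IsUnit (A + N)) :
    IsUnit N.toBlocks₂₁ := by
  refine isUnit_toBlocks₂₁_of_isUnit_add_of_sq_eq_zero (fun y => ?_) hN hInv
  simp [hA, fromBlocks_mulVec]

theorem squareZero_lowerLeft_invertible
    (F : Type*) [Field F] (k : ℕ) (hk : 1 ≤ k)
    (p : Polynomial F) (hp : p.Monic) (hpdeg : p.natDegree = k) (hp0 : p.coeff 0 ≠ 0)
    (A : Matrix (Fin k ⊕ Fin k) (Fin k ⊕ Fin k) F)
    (hA : A = Matrix.fromBlocks 0 0 0 (companionMatrix k p))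
    (N : Matrix (Fin k ⊕ Fin k) (Fin k ⊕ Fin k) F)
    (hN : N ^ 2 = 0) (hInv : IsUnit (A + N)) :
    IsUnit N.toBlocks₂₁ :=
  squareZero_lowerLeft_invertible_general F k p A hA N hN hInv
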